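/- Let s₀ > 0, δ > 0, C' > 0, let ω ⊆ ℝ² be a bounded open set and ω_δ ⊆ ω a measurable subset, and let v : ℝ³ → ℂ be continuously differentiable. Suppose ω ∖ ω_δ is the union of finitely many pairwise disjoint measurable sets S₁, …, S_N, each of which is either (type 1) of the form {(t₂,t₃) : x₁ < t₂ < x₂, y₁(t₂) < t₃ < y₂(t₂)} for some reals x₁ < x₂ and continuous functions y₁ ≤ y₂ with y₂ − y₁ ≤ C'δ on (x₁,x₂), such that v(s,t₂,y₂(t₂)) = 0 for all s ∈ (−s₀,s₀) and t₂ ∈ (x₁,x₂), or (type 2) of the analogous form with the roles of t₂ and t₃ interchanged, i.e. {(t₂,t₃) : y₁ < t₃ < y₂, x₁(t₃) < t₂ < x₂(t₃)} with continuous x₁ ≤ x₂, x₂ − x₁ ≤ C'δ, and v(s,x₂(t₃),t₃) = 0 for all s ∈ (−s₀,s₀) and t₃ ∈ (y₁,y₂). If moreover ∫_{(−s₀,s₀)×ω_δ} |v|² ds dt < (1/2)·∫_{(−s₀,s₀)×ω} |v|² ds dt, then ∫_{(−s₀,s₀)×ω} ( |∂_{t₂}v|² + |∂_{t₃}v|²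 ) ds dt ≥ (1/(2 C'² δ²))·∫_{(−s₀,s₀)×ω} |v|² ds dt. -/

import Mathlib

/-! For fixed `s` and `t₂`, on a type-1 strip the function `t₃ ↦ v (s, t₂, t₃)` vanishes at the
upper end of an interval of length at most `C'δ`, so the fundamental theorem of calculus and
Cauchy–Schwarz give `∫ |v|² ≤ (C'δ)² ∫ |∂_{t₃} v|²` on that interval (for type 2, swap `t₂` and
`t₃`). Integrating and summing over the strips bounds the integral of `|v|²` over
`(-s₀,s₀) × (ω ∖ ω_δ)` by `(C'δ)²` times the gradient integral, and by hypothesis that part carries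
more than half of `∫_{(-s₀,s₀)×ω} |v|²`. -/

open MeasureTheory

/-- Partial derivative in the second coordinate of a function on `ℝ³`. -/
noncomputable def pd2 {E : Type*} [NormedAddCommGroup E] [NormedSpace ℝ E]
    (F : ℝ × ℝ × ℝ → E) (p : ℝ × ℝ × ℝ) : E :=
  deriv (fun x => F (p.1, x, p.2.2)) p.2.1

/-- Partial derivative in the third coordinate of a function on `ℝ³`. -/
noncomputable def pd3 {E : Type*} [NormedAddCommGroup E] [NormedSpace ℝ E]
    (F : ℝ × ℝ × ℝ → E) (p : ℝ × ℝ × ℝ) : E :=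
  deriv (fun x => F (p.1, p.2.1, x)) p.2.2

/-- A set of "type 1": a curvilinear strip `{(t₂,t₃) : x₁ < t₂ < x₂, y₁(t₂) < t₃ < y₂(t₂)}`
of width at most `C'·δ`, on whose upper boundary `t₃ = y₂(t₂)` the function `v` vanishes
for all `s ∈ (−s₀,s₀)`. -/
def IsType1Strip (s₀ δ C' : ℝ) (v : ℝ × ℝ × ℝ → ℂ) (T : Set (ℝ × ℝ)) : Prop :=
  ∃ (x₁ x₂ : ℝ) (y₁ y₂ : ℝ → ℝ), x₁ < x₂ ∧ Continuous y₁ ∧ Continuous y₂ ∧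
    (∀ t₂ ∈ Set.Ioo x₁ x₂, y₁ t₂ ≤ y₂ t₂ ∧ y₂ t₂ - y₁ t₂ ≤ C' * δ) ∧
    T = {t : ℝ × ℝ | t.1 ∈ Set.Ioo x₁ x₂ ∧ t.2 ∈ Set.Ioo (y₁ t.1) (y₂ t.1)} ∧
    (∀ s ∈ Set.Ioo (-s₀) s₀, ∀ t₂ ∈ Set.Ioo x₁ x₂, v (s, t₂, y₂ t₂) = 0)

/-- A set of "type 2": the analogue of type 1 with the roles of `t₂` and `t₃` interchanged. -/
def IsType2Strip (s₀ δ C' : ℝ) (v : ℝ × ℝ × ℝ → ℂ) (T : Set (ℝ × ℝ)) : Prop :=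
  ∃ (y₁ y₂ : ℝ) (x₁ x₂ : ℝ → ℝ), y₁ < y₂ ∧ Continuous x₁ ∧ Continuous x₂ ∧
    (∀ t₃ ∈ Set.Ioo y₁ y₂, x₁ t₃ ≤ x₂ t₃ ∧ x₂ t₃ - x₁ t₃ ≤ C' * δ) ∧
    T = {t : ℝ × ℝ | t.2 ∈ Set.Ioo y₁ y₂ ∧ t.1 ∈ Set.Ioo (x₁ t.2) (x₂ t.2)} ∧
    (∀ s ∈ Set.Ioo (-s₀) s₀, ∀ t₃ ∈ Set.Ioo y₁ y₂, v (s, x₂ t₃, t₃) = 0)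

open Set Bornology

theorem Continuous.integrableOn_of_isBounded {X E : Type*} [MeasurableSpace X] [MetricSpace X]
    [ProperSpace X] [OpensMeasurableSpace X] [SecondCountableTopology X]
    [NormedAddCommGroup E] {μ : Measure X} [IsLocallyFiniteMeasure μ]
    {f : X → E} (hf : Continuous f) {s : Set X} (hs : IsBounded s) : IntegrableOn f s μ :=
  (hf.locallyIntegrable.integrableOn_isCompact hs.isCompact_closure).mono_set subset_closure

theorem sq_integral_le_measureReal_mul_integral_sq {α : Type*} [MeasurableSpace α]
    {μ : Measure α} [IsFiniteMeasure μ] {g : α → ℝ} (hg : Integrable g μ)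
    (hg2 : Integrable (fun x => g x ^ 2) μ) :
    (∫ x, g x ∂μ) ^ 2 ≤ μ.real univ * ∫ x, g x ^ 2 ∂μ := by
  rcases eq_zero_or_neZero μ with rfl | _
  · simp
  have hμ : 0 < μ.real univ := measureReal_univ_pos
  have jensen := (Even.convexOn_pow (𝕜 := ℝ) even_two).map_average_le
    (continuous_pow 2).continuousOn isClosed_univ (by simp) hg hg2
  simp only [average_eq, smul_eq_mul] at jensen
  rw [mul_pow, inv_pow, ← div_eq_inv_mul, ← div_eq_inv_mul,
    div_le_div_iff₀ (by positivity) hμ] at jensen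
  nlinarith

theorem integral_norm_sq_le_of_hasDerivAt_of_eq_zero {E : Type*} [NormedAddCommGroup E]
    [NormedSpace ℝ E] [CompleteSpace E] {f f' : ℝ → E} (hf : ∀ x, HasDerivAt f (f' x) x)
    (hf' : Continuous f') {a b : ℝ} (hab : a ≤ b) (hb : f b = 0) :
    ∫ x in Ioo a b, ‖f x‖ ^ 2 ≤ (b - a) ^ 2 * ∫ x in Ioo a b, ‖f' x‖ ^ 2 := by
  set M := ∫ x in Ioo a b, ‖f' x‖
  have hfM : ∀ x ∈ Ioo a b, ‖f x‖ ≤ M := fun x hx => by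
    have ftc : ∫ y in x..b, f' y = f b - f x :=
      intervalIntegral.integral_eq_sub_of_hasDerivAt (fun y _ => hf y)
        (hf'.intervalIntegrable x b)
    calc ‖f x‖ = ‖∫ y in x..b, f' y‖ := by rw [ftc, hb, zero_sub, norm_neg]
      _ ≤ ∫ y in x..b, ‖f' y‖ := intervalIntegral.norm_integral_le_integral_norm hx.2.le
      _ ≤ ∫ y in a..b, ‖f' y‖ := intervalIntegral.integral_mono_interval hx.1.le hx.2.le le_rfl
          (.of_forall fun y => norm_nonneg _) (hf'.norm.intervalIntegrable a b)
      _ = M := by rw [intervalIntegral.integral_of_le hab, integral_Ioc_eq_integral_Ioo]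
  have hM : M ^ 2 ≤ (b - a) * ∫ x in Ioo a b, ‖f' x‖ ^ 2 := by
    have : IsFiniteMeasure (volume.restrict (Ioo a b)) :=
      isFiniteMeasure_restrict.2 measure_Ioo_lt_top.ne
    simpa [Real.volume_real_Ioo_of_le hab] using sq_integral_le_measureReal_mul_integral_sq
      (hf'.norm.integrableOn_of_isBounded (μ := volume) (Metric.isBounded_Ioo a b))
      ((hf'.norm.pow 2).integrableOn_of_isBounded (μ := volume) (Metric.isBounded_Ioo a b))
  have hfM2 : ∫ x in Ioo a b, ‖f x‖ ^ 2 ≤ M ^ 2 * (b - a) := by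
    have := norm_setIntegral_le_of_norm_le_const (f := fun x => ‖f x‖ ^ 2) (C := M ^ 2)
      (measure_Ioo_lt_top (μ := volume)) fun x hx => by
        rw [Real.norm_of_nonneg (by positivity)]
        exact pow_le_pow_left₀ (norm_nonneg _) (hfM x hx) 2
    rw [Real.volume_real_Ioo_of_le hab] at this
    exact (Real.le_norm_self _).trans this
  nlinarith [sub_nonneg.2 hab]

section RegionBetween

variable {α E : Type*} [NormedAddCommGroup E] [NormedSpace ℝ E] {f g : α → ℝ} {s : Set α}

theorem integral_indicator_regionBetween (F : α × ℝ → E) (x : α) :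
    ∫ y, (regionBetween f g s).indicator F (x, y) =
      s.indicator (fun x => ∫ y in Ioo (f x) (g x), F (x, y)) x := by
  by_cases hx : x ∈ s
  · simp [hx, regionBetween, indicator, ← integral_indicator measurableSet_Ioo]
  · simp [hx, regionBetween, indicator]

variable [MeasurableSpace α] {μ : Measure α} {F : α × ℝ → E}

theorem setIntegral_regionBetween [SFinite μ] (hf : Measurable f) (hg : Measurable g)
    (hs : MeasurableSet s) (hF : IntegrableOn F (regionBetween f g s) (μ.prod volume)) :
    ∫ p in regionBetween f g s, F p ∂μ.prod volume =
      ∫ x in s, (∫ y in Ioo (f x) (g x), F (x, y)) ∂μ := by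
  have hR := measurableSet_regionBetween hf hg hs
  rw [← integral_indicator hR, integral_prod _ ((integrable_indicator_iff hR).2 hF)]
  simp_rw [integral_indicator_regionBetween]
  exact integral_indicator hs

theorem IntegrableOn.integral_regionBetween (hf : Measurable f) (hg : Measurable g)
    (hs : MeasurableSet s) (hF : IntegrableOn F (regionBetween f g s) (μ.prod volume)) :
    IntegrableOn (fun x => ∫ y in Ioo (f x) (g x), F (x, y)) s μ := by
  have := ((integrable_indicator_iff (measurableSet_regionBetween hf hg hs)).2
    hF).integral_prod_left
  simp_rw [integral_indicator_regionBetween] at this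
  exact (integrable_indicator_iff hs).1 this

end RegionBetween

theorem setIntegral_regionBetween_norm_sq_le {α E : Type*} [MeasurableSpace α] {μ : Measure α}
    [SFinite μ] [NormedAddCommGroup E] [NormedSpace ℝ E] [CompleteSpace E]
    {f g : α → ℝ} {s : Set α} (hf : Measurable f) (hg : Measurable g) (hs : MeasurableSet s)
    {L : ℝ} (hwidth : ∀ x ∈ s, f x ≤ g x ∧ g x - f x ≤ L) {u u' : α × ℝ → E}
    (hu : ∀ x y, HasDerivAt (fun y => u (x, y)) (u' (x, y)) y)
    (hu' : ∀ x, Continuous fun y => u' (x, y)) (hzero : ∀ x ∈ s, u (x, g x) = 0)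
    (hint : IntegrableOn (fun p => ‖u p‖ ^ 2) (regionBetween f g s) (μ.prod volume))
    (hint' : IntegrableOn (fun p => ‖u' p‖ ^ 2) (regionBetween f g s) (μ.prod volume)) :
    ∫ p in regionBetween f g s, ‖u p‖ ^ 2 ∂μ.prod volume ≤
      L ^ 2 * ∫ p in regionBetween f g s, ‖u' p‖ ^ 2 ∂μ.prod volume := by
  rw [setIntegral_regionBetween hf hg hs hint, setIntegral_regionBetween hf hg hs hint',
    ← integral_const_mul]
  refine setIntegral_mono_on (IntegrableOn.integral_regionBetween hf hg hs hint)
    ((IntegrableOn.integral_regionBetween hf hg hs hint').const_mul _) hs fun x hx => ?_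
  obtain ⟨hfg, hL⟩ := hwidth x hx
  calc ∫ y in Ioo (f x) (g x), ‖u (x, y)‖ ^ 2
      ≤ (g x - f x) ^ 2 * ∫ y in Ioo (f x) (g x), ‖u' (x, y)‖ ^ 2 :=
        integral_norm_sq_le_of_hasDerivAt_of_eq_zero (hu x) (hu' x) hfg (hzero x hx)
    _ ≤ L ^ 2 * ∫ y in Ioo (f x) (g x), ‖u' (x, y)‖ ^ 2 := by gcongr

theorem setIntegral_prod_mono_of_forall {α β : Type*} [MeasurableSpace α] [MeasurableSpace β]
    {μ : Measure α} {ν : Measure β} [SFinite μ] [SFinite ν] {F G : α × β → ℝ}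
    {s : Set α} {t : Set β} (hs : MeasurableSet s) (hF : IntegrableOn F (s ×ˢ t) (μ.prod ν))
    (hG : IntegrableOn G (s ×ˢ t) (μ.prod ν))
    (h : ∀ x ∈ s, ∫ y in t, F (x, y) ∂ν ≤ ∫ y in t, G (x, y) ∂ν) :
    ∫ z in s ×ˢ t, F z ∂μ.prod ν ≤ ∫ z in s ×ˢ t, G z ∂μ.prod ν := by
  rw [setIntegral_prod _ hF, setIntegral_prod _ hG]
  rw [IntegrableOn, ← Measure.prod_restrict] at hF hG
  exact setIntegral_mono_on hF.integral_prod_left hG.integral_prod_left hs h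

theorem setIntegral_iUnion_le_const_mul {X ι : Type*} [MeasurableSpace X] {μ : Measure X}
    [Fintype ι] {S : ι → Set X} (hSm : ∀ i, MeasurableSet (S i))
    (hSd : Pairwise (Function.onFun Disjoint S)) {f g : X → ℝ}
    (hf : ∀ i, IntegrableOn f (S i) μ) (hg : ∀ i, IntegrableOn g (S i) μ) {c : ℝ}
    (h : ∀ i, ∫ x in S i, f x ∂μ ≤ c * ∫ x in S i, g x ∂μ) :
    ∫ x in ⋃ i, S i, f x ∂μ ≤ c * ∫ x in ⋃ i, S i, g x ∂μ := by
  rw [integral_iUnion_fintype hSm hSd hf, integral_iUnion_fintype hSm hSd hg, Finset.mul_sum]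
  exact Finset.sum_le_sum fun i _ => h i

theorem setIntegral_le_add_const_mul_of_sdiff_eq_iUnion {X ι : Type*} [MeasurableSpace X]
    {μ : Measure X} [Fintype ι] {U V : Set X} {S : ι → Set X} (hVU : V ⊆ U)
    (hUV : U \ V = ⋃ i, S i) (hSm : ∀ i, MeasurableSet (S i))
    (hSd : Pairwise (Function.onFun Disjoint S)) {f g : X → ℝ} (hf : IntegrableOn f U μ)
    (hg : IntegrableOn g U μ) (hg0 : ∀ x, 0 ≤ g x) {c : ℝ} (hc : 0 ≤ c)
    (h : ∀ i, ∫ x in S i, f x ∂μ ≤ c * ∫ x in S i, g x ∂μ) :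
    ∫ x in U, f x ∂μ ≤ ∫ x in V, f x ∂μ + c * ∫ x in U, g x ∂μ := by
  have hSU i : S i ⊆ U := (hUV ▸ subset_iUnion S i).trans sdiff_subset
  have hsdiff : ∫ x in U \ V, f x ∂μ ≤ c * ∫ x in U \ V, g x ∂μ := hUV ▸
    setIntegral_iUnion_le_const_mul hSm hSd (fun i => hf.mono_set (hSU i))
      (fun i => hg.mono_set (hSU i)) h
  have hsplit : ∫ x in U, f x ∂μ = ∫ x in V, f x ∂μ + ∫ x in U \ V, f x ∂μ := by
    conv_lhs => rw [← union_sdiff_cancel hVU]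
    exact setIntegral_union disjoint_sdiff_right (hUV ▸ MeasurableSet.iUnion hSm)
      (hf.mono_set hVU) (hf.mono_set sdiff_subset)
  rw [hsplit]
  gcongr
  refine hsdiff.trans (mul_le_mul_of_nonneg_left ?_ hc)
  exact setIntegral_mono_set hg (.of_forall hg0) sdiff_subset.eventuallyLE

section PartialDerivatives

variable {E : Type*} [NormedAddCommGroup E] [NormedSpace ℝ E] {v : ℝ × ℝ × ℝ → E}

theorem hasDerivAt_pd2 (hv : Differentiable ℝ v) (s t₂ t₃ : ℝ) :
    HasDerivAt (fun x => v (s, x, t₃)) (pd2 v (s, t₂, t₃)) t₂ :=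
  ((hv.comp (by fun_prop : Differentiable ℝ fun x : ℝ => (s, x, t₃))) t₂).hasDerivAt

theorem hasDerivAt_pd3 (hv : Differentiable ℝ v) (s t₂ t₃ : ℝ) :
    HasDerivAt (fun x => v (s, t₂, x)) (pd3 v (s, t₂, t₃)) t₃ :=
  ((hv.comp (by fun_prop : Differentiable ℝ fun x : ℝ => (s, t₂, x))) t₃).hasDerivAt

theorem pd2_eq_fderiv (hv : Differentiable ℝ v) (p : ℝ × ℝ × ℝ) :
    pd2 v p = fderiv ℝ v p (0, 1, 0) :=
  ((hv p).hasFDerivAt.comp_hasDerivAt p.2.1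
    (((hasDerivAt_const _ p.1).prodMk ((hasDerivAt_id _).prodMk (hasDerivAt_const _ p.2.2))))).deriv

theorem pd3_eq_fderiv (hv : Differentiable ℝ v) (p : ℝ × ℝ × ℝ) :
    pd3 v p = fderiv ℝ v p (0, 0, 1) :=
  ((hv p).hasFDerivAt.comp_hasDerivAt p.2.2
    (((hasDerivAt_const _ p.1).prodMk ((hasDerivAt_const _ p.2.1).prodMk (hasDerivAt_id _))))).deriv

theorem continuous_pd2 (hv : ContDiff ℝ 1 v) : Continuous (pd2 v) := by
  simp_rw [funext (pd2_eq_fderiv (hv.differentiable one_ne_zero))]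
  exact (hv.continuous_fderiv one_ne_zero).clm_apply continuous_const

theorem continuous_pd3 (hv : ContDiff ℝ 1 v) : Continuous (pd3 v) := by
  simp_rw [funext (pd3_eq_fderiv (hv.differentiable one_ne_zero))]
  exact (hv.continuous_fderiv one_ne_zero).clm_apply continuous_const

end PartialDerivatives

section Strips

variable {s₀ δ C' : ℝ} {v : ℝ × ℝ × ℝ → ℂ} {T : Set (ℝ × ℝ)}

theorem IsType1Strip.measurableSet (hT : IsType1Strip s₀ δ C' v T) : MeasurableSet T := by
  obtain ⟨x₁, x₂, y₁, y₂, -, hy₁, hy₂, -, rfl, -⟩ := hT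
  exact measurableSet_regionBetween hy₁.measurable hy₂.measurable measurableSet_Ioo

theorem IsType2Strip.measurableSet (hT : IsType2Strip s₀ δ C' v T) : MeasurableSet T := by
  obtain ⟨y₁, y₂, x₁, x₂, -, hx₁, hx₂, -, rfl, -⟩ := hT
  exact measurable_swap
    (measurableSet_regionBetween hx₁.measurable hx₂.measurable measurableSet_Ioo)

theorem setIntegral_norm_sq_le_of_isType1Strip (hv : ContDiff ℝ 1 v)
    (hT : IsType1Strip s₀ δ C' v T) (hTb : IsBounded T) :
    ∫ p in Ioo (-s₀) s₀ ×ˢ T, ‖v p‖ ^ 2 ≤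
      (C' * δ) ^ 2 * ∫ p in Ioo (-s₀) s₀ ×ˢ T, ‖pd3 v p‖ ^ 2 := by
  obtain ⟨x₁, x₂, y₁, y₂, -, hy₁, hy₂, hwidth, rfl, hzero⟩ := hT
  have hQT : IsBounded (Ioo (-s₀) s₀ ×ˢ _) := (Metric.isBounded_Ioo _ _).prod hTb
  rw [← integral_const_mul]
  refine setIntegral_prod_mono_of_forall measurableSet_Ioo
    ((hv.continuous.norm.pow 2).integrableOn_of_isBounded hQT)
    ((continuous_const.mul ((continuous_pd3 hv).norm.pow 2)).integrableOn_of_isBounded hQT)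
    fun s hs => ?_
  rw [integral_const_mul]
  exact setIntegral_regionBetween_norm_sq_le hy₁.measurable hy₂.measurable measurableSet_Ioo
    hwidth (fun x y => hasDerivAt_pd3 (hv.differentiable one_ne_zero) s x y)
    (fun x => (continuous_pd3 hv).comp (by fun_prop)) (hzero s hs)
    ((hv.continuous.comp (by fun_prop)).norm.pow 2 |>.integrableOn_of_isBounded hTb)
    (((continuous_pd3 hv).comp (by fun_prop)).norm.pow 2 |>.integrableOn_of_isBounded hTb)

theorem setIntegral_norm_sq_le_of_isType2Strip (hv : ContDiff ℝ 1 v)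
    (hT : IsType2Strip s₀ δ C' v T) (hTb : IsBounded T) :
    ∫ p in Ioo (-s₀) s₀ ×ˢ T, ‖v p‖ ^ 2 ≤
      (C' * δ) ^ 2 * ∫ p in Ioo (-s₀) s₀ ×ˢ T, ‖pd2 v p‖ ^ 2 := by
  obtain ⟨y₁, y₂, x₁, x₂, -, hx₁, hx₂, hwidth, hTeq, hzero⟩ := hT
  replace hTeq : T = Prod.swap ⁻¹' regionBetween x₁ x₂ (Ioo y₁ y₂) := hTeq
  subst hTeq
  have hQT : IsBounded (Ioo (-s₀) s₀ ×ˢ _) := (Metric.isBounded_Ioo _ _).prod hTb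
  rw [← integral_const_mul]
  refine setIntegral_prod_mono_of_forall measurableSet_Ioo
    ((hv.continuous.norm.pow 2).integrableOn_of_isBounded hQT)
    ((continuous_const.mul ((continuous_pd2 hv).norm.pow 2)).integrableOn_of_isBounded hQT)
    fun s hs => ?_
  have hswap : MeasurePreserving (Prod.swap : ℝ × ℝ → ℝ × ℝ) := Measure.measurePreserving_swap
  have hemb : MeasurableEmbedding (Prod.swap : ℝ × ℝ → ℝ × ℝ) :=
    MeasurableEquiv.prodComm.measurableEmbedding
  have hcomp (F : ℝ × ℝ → ℝ) : ∫ t in Prod.swap ⁻¹' regionBetween x₁ x₂ (Ioo y₁ y₂), F t =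
      ∫ t in regionBetween x₁ x₂ (Ioo y₁ y₂), F t.swap :=
    (hswap.setIntegral_preimage_emb hemb F _).symm
  rw [integral_const_mul, hcomp, hcomp]
  exact setIntegral_regionBetween_norm_sq_le (u := fun t => v (s, t.2, t.1))
    hx₁.measurable hx₂.measurable measurableSet_Ioo
    hwidth (fun x y => hasDerivAt_pd2 (hv.differentiable one_ne_zero) s y x)
    (fun x => (continuous_pd2 hv).comp (by fun_prop)) (hzero s hs)
    ((hswap.integrableOn_comp_preimage hemb).2
      ((hv.continuous.comp (by fun_prop)).norm.pow 2 |>.integrableOn_of_isBounded hTb))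
    ((hswap.integrableOn_comp_preimage hemb).2
      (((continuous_pd2 hv).comp (by fun_prop)).norm.pow 2 |>.integrableOn_of_isBounded hTb))

theorem setIntegral_norm_sq_le_of_isStrip (hv : ContDiff ℝ 1 v)
    (hT : IsType1Strip s₀ δ C' v T ∨ IsType2Strip s₀ δ C' v T)
    (hTb : IsBounded T) :
    ∫ p in Ioo (-s₀) s₀ ×ˢ T, ‖v p‖ ^ 2 ≤
      (C' * δ) ^ 2 * ∫ p in Ioo (-s₀) s₀ ×ˢ T, (‖pd2 v p‖ ^ 2 + ‖pd3 v p‖ ^ 2) := by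
  have hQT : IsBounded (Ioo (-s₀) s₀ ×ˢ T) := (Metric.isBounded_Ioo _ _).prod hTb
  have hG : IntegrableOn (fun p => ‖pd2 v p‖ ^ 2 + ‖pd3 v p‖ ^ 2) (Ioo (-s₀) s₀ ×ˢ T) :=
    ((continuous_pd2 hv).norm.pow 2 |>.add
      ((continuous_pd3 hv).norm.pow 2)).integrableOn_of_isBounded hQT
  have hmono {F : ℝ × ℝ × ℝ → ℝ} (hF : Continuous F)
      (hle : ∀ p, F p ≤ ‖pd2 v p‖ ^ 2 + ‖pd3 v p‖ ^ 2) :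
      ∫ p in Ioo (-s₀) s₀ ×ˢ T, F p ≤
        ∫ p in Ioo (-s₀) s₀ ×ˢ T, (‖pd2 v p‖ ^ 2 + ‖pd3 v p‖ ^ 2) :=
    integral_mono (hF.integrableOn_of_isBounded hQT) hG hle
  rcases hT with hT | hT
  · exact (setIntegral_norm_sq_le_of_isType1Strip hv hT hTb).trans <|
      mul_le_mul_of_nonneg_left (hmono ((continuous_pd3 hv).norm.pow 2)
        fun p => le_add_of_nonneg_left (sq_nonneg _)) (sq_nonneg _)
  · exact (setIntegral_norm_sq_le_of_isType2Strip hv hT hTb).trans <|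
      mul_le_mul_of_nonneg_left (hmono ((continuous_pd2 hv).norm.pow 2)
        fun p => le_add_of_nonneg_right (sq_nonneg _)) (sq_nonneg _)

end Strips

theorem stmt_15_general (s₀ δ C' : ℝ)
    (ω : Set (ℝ × ℝ)) (hωb : Bornology.IsBounded ω)
    (ωδ : Set (ℝ × ℝ)) (hωδ : ωδ ⊆ ω)
    (v : ℝ × ℝ × ℝ → ℂ) (hv : ContDiff ℝ 1 v)
    (N : ℕ) (S : Fin N → Set (ℝ × ℝ))
    (hSdisj : Pairwise (Function.onFun Disjoint S))
    (hScover : ω \ ωδ = ⋃ i, S i)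
    (hStype : ∀ i, IsType1Strip s₀ δ C' v (S i) ∨ IsType2Strip s₀ δ C' v (S i))
    (hsmall : ∫ p in Set.Ioo (-s₀) s₀ ×ˢ ωδ, ‖v p‖ ^ 2
        < (1 / 2) * ∫ p in Set.Ioo (-s₀) s₀ ×ˢ ω, ‖v p‖ ^ 2) :
    ∫ p in Set.Ioo (-s₀) s₀ ×ˢ ω, (‖pd2 v p‖ ^ 2 + ‖pd3 v p‖ ^ 2)
      ≥ (1 / (2 * C' ^ 2 * δ ^ 2)) * ∫ p in Set.Ioo (-s₀) s₀ ×ˢ ω, ‖v p‖ ^ 2 := by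
  set Q := Ioo (-s₀) s₀
  have hQω : IsBounded (Q ×ˢ ω) := (Metric.isBounded_Ioo _ _).prod hωb
  have hSω i : S i ⊆ ω := (hScover ▸ subset_iUnion S i).trans sdiff_subset
  have hdecomp := setIntegral_le_add_const_mul_of_sdiff_eq_iUnion (μ := volume)
    (S := fun i => Q ×ˢ S i) (f := fun p => ‖v p‖ ^ 2)
    (g := fun p => ‖pd2 v p‖ ^ 2 + ‖pd3 v p‖ ^ 2) (prod_mono_right hωδ)
    (by rw [prod_sdiff_prod, sdiff_self, empty_prod, union_empty, hScover,
      prod_iUnion])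
    (fun i => measurableSet_Ioo.prod
      ((hStype i).elim IsType1Strip.measurableSet IsType2Strip.measurableSet))
    (fun i j hij => disjoint_prod.2 (Or.inr (hSdisj hij)))
    ((hv.continuous.norm.pow 2).integrableOn_of_isBounded hQω)
    ((((continuous_pd2 hv).norm.pow 2).add
      ((continuous_pd3 hv).norm.pow 2)).integrableOn_of_isBounded hQω)
    (fun p => by positivity) (sq_nonneg _)
    fun i => setIntegral_norm_sq_le_of_isStrip hv (hStype i) (hωb.subset (hSω i))
  rw [ge_iff_le, one_div_mul_eq_div]
  exact div_le_of_le_mul₀ (by positivity) (integral_nonneg fun p => by positivity)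
    (by rw [mul_pow] at hdecomp; linarith)

/-- if `ω ∖ ω_δ` is a finite pairwise disjoint union of strips of width
at most `C'·δ` (of type 1 or type 2, with `v` vanishing on the appropriate boundary) and
`∫_{(−s₀,s₀)×ω_δ} |v|² < (1/2)·∫_{(−s₀,s₀)×ω} |v|²`, then
`∫_{(−s₀,s₀)×ω} (|∂_{t₂}v|² + |∂_{t₃}v|²) ≥ (1/(2C'²δ²))·∫_{(−s₀,s₀)×ω} |v|²`. -/
theorem stmt_15 (s₀ δ C' : ℝ) (hs₀ : 0 < s₀) (hδ : 0 < δ) (hC' : 0 < C')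
    (ω : Set (ℝ × ℝ)) (hωo : IsOpen ω) (hωb : Bornology.IsBounded ω)
    (ωδ : Set (ℝ × ℝ)) (hωδ : ωδ ⊆ ω) (hωδm : MeasurableSet ωδ)
    (v : ℝ × ℝ × ℝ → ℂ) (hv : ContDiff ℝ 1 v)
    (N : ℕ) (S : Fin N → Set (ℝ × ℝ))
    (hSm : ∀ i, MeasurableSet (S i))
    (hSdisj : Pairwise (Function.onFun Disjoint S))
    (hScover : ω \ ωδ = ⋃ i, S i)
    (hStype : ∀ i, IsType1Strip s₀ δ C' v (S i) ∨ IsType2Strip s₀ δ C' v (S i))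
    (hsmall : ∫ p in Set.Ioo (-s₀) s₀ ×ˢ ωδ, ‖v p‖ ^ 2
        < (1 / 2) * ∫ p in Set.Ioo (-s₀) s₀ ×ˢ ω, ‖v p‖ ^ 2) :
    ∫ p in Set.Ioo (-s₀) s₀ ×ˢ ω, (‖pd2 v p‖ ^ 2 + ‖pd3 v p‖ ^ 2)
      ≥ (1 / (2 * C' ^ 2 * δ ^ 2)) * ∫ p in Set.Ioo (-s₀) s₀ ×ˢ ω, ‖v p‖ ^ 2 :=
  stmt_15_general s₀ δ C' ω hωb ωδ hωδ v hv N S hSdisj hScover hStype hsmall
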